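/- Let f(t) = t^m − a ∈ F[t] ⊂ R = D[t;σ] with m > 1, and set L = Nuc_r(S_f) ∩ D. Then Nuc_r(S_f) = L ⊕ Lt ⊕ ⋯ ⊕ Lt^{m-1} = L[t;σ|_L]/L[t;σ|_L]f(t); that is, a polynomial g(t) = ∑_{i=0}^{m-1} g_i t^i of degree < m lies in Nuc_r(S_f) if and only if g_i ∈ L for all i. -/

import Mathlib

/-!
The right nucleus of `S_f` is the eigenring `E(f) = {g : deg g < m, f g ∈ R f}`: right
division by `f = t^m - a` has unique remainders, so every `g ∈ E(f)` associates on the right,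
and conversely associativity of `t ∘ t^(m-1) ∘ g`, with `t · t^(m-1) = f + a`, forces
`f g ∈ R f`. Since `σ` fixes `a`, the powers `t^i` commute with `f`, and
`f · c t^i = σ^m(c) t^i · f + (σ^m(c) a - a c) t^i`. Hence the remainder of `f g` is computed
coefficientwise, and `g ∈ E(f)` iff each coefficient satisfies `σ^m(g_i) a = a g_i`, which is
the condition for the constant `g_i` itself to lie in `E(f)`.
-/

/-- `g` right-divides `f`, i.e. `f ∈ Rg`. -/
def RDvd {R : Type} [Ring R] (g f : R) : Prop := ∃ q : R, f = q * g

/-- `f` is right-invariant : `f·R ⊆ R·f`. -/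
def RightInvariant {R : Type} [Ring R] (f : R) : Prop := ∀ r : R, ∃ q : R, f * r = q * f

/-- `(f, g)_r = 1`: the only common right divisors of `f` and `g` are units. -/
def RightCoprimeWith {R : Type} [Ring R] (f g : R) : Prop :=
  ∀ e : R, RDvd e f → RDvd e g → IsUnit e

/-- `f` and `g` are similar: `R/Rf ≅ R/Rg` as left `R`-modules. -/
def SimilarP {R : Type} [Ring R] (f g : R) : Prop :=
  Nonempty ((R ⧸ (Submodule.span R {f})) ≃ₗ[R] (R ⧸ (Submodule.span R {g})))

/-- `b` is a bound of `f`: `b` is right-invariant, `f` right-divides `b`, and `Rb` is the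
largest two-sided ideal contained in `Rf`. -/
def IsBound {R : Type} [Ring R] (f b : R) : Prop :=
  b ≠ 0 ∧ RightInvariant b ∧ RDvd f b ∧
    ∀ g : R, g ≠ 0 → RightInvariant g → RDvd f g → RDvd b g

/-- Data witnessing that the ring `R` is a skew polynomial ring `D[t;sigma,delta]`:
`iota` embeds the coefficients, `t` is the indeterminate with `t*a = sigma(a)*t + delta(a)`,
every element has a unique finite coefficient representation, and `rmod g f` is the
remainder of `g` upon right division by `f`. -/
structure SkewPolyData (D : Type) [DivisionRing D] (σ : D →+* D) (δ : D → D)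
    (R : Type) [Ring R] where
  ι : D →+* R
  t : R
  coeff : R → (ℕ →₀ D)
  rmod : R → R → R
  t_mul : ∀ a : D, t * ι a = ι (σ a) * t + ι (δ a)
  sum_coeff : ∀ x : R, ((coeff x).sum fun i a => ι a * t ^ i) = x
  coeff_sum : ∀ c : ℕ →₀ D, coeff (c.sum fun i a => ι a * t ^ i) = c
  rmod_spec : ∀ g f : R, f ≠ 0 →
    (∃ q : R, g = q * f + rmod g f) ∧
      (coeff (rmod g f)).support.max < (coeff f).support.max

namespace SkewPolyData

variable {D : Type} [DivisionRing D] {σ : D →+* D} {δ : D → D}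
variable {R : Type} [Ring R] (S : SkewPolyData D σ δ R)

/-- The degree of a skew polynomial (`⊥` for `0`). -/
noncomputable def deg (x : R) : WithBot ℕ := (S.coeff x).support.max

/-- `f` is monic of degree `m`. -/
def MonicDeg (f : R) (m : ℕ) : Prop := S.coeff f m = 1 ∧ S.deg f = (m : WithBot ℕ)

/-- `f` is irreducible in `R`: it is non-constant and is not a product of two
polynomials of strictly smaller degree. -/
def Irred (f : R) : Prop :=
  (1 : WithBot ℕ) ≤ S.deg f ∧
    ∀ g h : R, f = g * h → S.deg g < S.deg f → S.deg h < S.deg f → False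

/-- multiplication in the Petit algebra `S_f` (on representatives in `R`). -/
def pmul (f a b : R) : R := S.rmod (a * b) f

/-- the underlying set of the Petit algebra `S_f`: polynomials of degree `< deg f`. -/
def carr (f : R) : Set R := {x : R | S.deg x < S.deg f}

/-- the right nucleus of the Petit algebra `S_f`. -/
def NucR (f : R) : Set R :=
  {x : R | x ∈ S.carr f ∧ ∀ a ∈ S.carr f, ∀ b ∈ S.carr f,
    S.pmul f (S.pmul f a b) x = S.pmul f a (S.pmul f b x)}

/-- the nucleus (left ∩ middle ∩ right) of the Petit algebra `S_f`. -/
def NucAll (f : R) : Set R :=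
  {x : R | x ∈ S.carr f ∧
    (∀ a ∈ S.carr f, ∀ b ∈ S.carr f,
      S.pmul f (S.pmul f x a) b = S.pmul f x (S.pmul f a b)) ∧
    (∀ a ∈ S.carr f, ∀ b ∈ S.carr f,
      S.pmul f (S.pmul f a x) b = S.pmul f a (S.pmul f x b)) ∧
    (∀ a ∈ S.carr f, ∀ b ∈ S.carr f,
      S.pmul f (S.pmul f a b) x = S.pmul f a (S.pmul f b x))}

/-- the eigenring `E(f)` of `f`, as the set of its canonical representatives
(polynomials of degree `< deg f` with `f·g ∈ Rf`), with multiplication `pmul f`. -/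
def EigR (f : R) : Set R :=
  {x : R | S.deg x < S.deg f ∧ ∃ q : R, f * x = q * f}

/-- evaluation of a polynomial with coefficients in the subfield `K` of `D`
at the (central) element `x₀` of `R`. -/
noncomputable def ceval (K : Subfield D) (x₀ : R) (p : Polynomial K) : R :=
  Polynomial.eval₂ (S.ι.comp K.subtype) x₀ p

/-- `h = p(x₀)` is the minimal central left multiple of `f`: `p ∈ K[x]` is monic of
minimal degree such that `f` right-divides `p(x₀)`, and `h = p(x₀)`. -/
def IsMclm (K : Subfield D) (x₀ : R) (f h : R) (p : Polynomial K) : Prop :=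
  p.Monic ∧ h = S.ceval K x₀ p ∧ RDvd f h ∧
    ∀ q : Polynomial K, q.Monic → RDvd f (S.ceval K x₀ q) → p.degree ≤ q.degree

/-- the subset `X` of `R` has a basis of size `N` over the set of coefficients `Fc ⊆ D`. -/
def RelDimR (Fc : Set D) (X : Set R) (N : ℕ) : Prop :=
  ∃ b : Fin N → R, (∀ i, b i ∈ X) ∧
    ∀ x ∈ X, ∃! cf : Fin N → D, (∀ i, cf i ∈ Fc) ∧ x = ∑ i, S.ι (cf i) * b i

/-- `ψ` restricts to an isomorphism of the subset `X` of the Petit algebra `S_f`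
(with multiplication `∘_f`) onto the ring `B`. -/
def SubMulIso (f : R) (X : Set R) (B : Type) [Ring B] (ψ : R → B) : Prop :=
  Set.BijOn ψ X Set.univ ∧ ψ 1 = 1 ∧
    ∀ x ∈ X, ∀ y ∈ X,
      ψ (x + y) = ψ x + ψ y ∧ ψ (S.pmul f x y) = ψ x * ψ y

end SkewPolyData

/-- the subset `X ⊆ D` has a basis of size `N` over the set of coefficients `Fc ⊆ D`. -/
def RelDimD {D : Type} [DivisionRing D] (Fc X : Set D) (N : ℕ) : Prop :=
  ∃ b : Fin N → D, (∀ i, b i ∈ X) ∧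
    ∀ x ∈ X, ∃! cf : Fin N → D, (∀ i, cf i ∈ Fc) ∧ x = ∑ i, cf i * b i

theorem deltaZero {D : Type} [DivisionRing D] {δ : D → D}
    (hadd : ∀ x y : D, δ (x + y) = δ x + δ y) : δ 0 = 0 := by
  have h := hadd 0 0
  rw [add_zero] at h
  exact add_left_cancel (by rw [add_zero]; exact h.symm)

theorem deltaOne {D : Type} [DivisionRing D] {σ : D →+* D} {δ : D → D}
    (hleib : ∀ x y : D, δ (x * y) = σ x * δ y + δ x * y) : δ 1 = 0 := by
  have h := hleib 1 1
  rw [mul_one, map_one, one_mul, mul_one] at h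
  exact add_left_cancel (by rw [add_zero]; exact h.symm)

/-- the subfield `F = C ∩ Fix(σ) ∩ Const(δ)` of `D`. -/
def ctrSubfield {D : Type} [DivisionRing D] (σ : D →+* D) (δ : D → D)
    (hadd : ∀ x y : D, δ (x + y) = δ x + δ y)
    (hleib : ∀ x y : D, δ (x * y) = σ x * δ y + δ x * y) : Subfield D where
  carrier := {a : D | a ∈ Set.center D ∧ σ a = a ∧ δ a = 0}
  zero_mem' := ⟨Set.zero_mem_center, map_zero σ, deltaZero hadd⟩
  one_mem' := ⟨Set.one_mem_center, map_one σ, deltaOne (σ := σ) hleib⟩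
  add_mem' := fun ha hb =>
    ⟨Set.add_mem_center ha.1 hb.1, by rw [map_add, ha.2.1, hb.2.1],
      by rw [hadd, ha.2.2, hb.2.2, add_zero]⟩
  mul_mem' := fun ha hb =>
    ⟨Set.mul_mem_center ha.1 hb.1, by rw [map_mul, ha.2.1, hb.2.1],
      by rw [hleib, ha.2.2, hb.2.2, mul_zero, zero_mul, add_zero]⟩
  neg_mem' := fun {a} ha => by
    refine ⟨Set.neg_mem_center ha.1, by rw [map_neg, ha.2.1], ?_⟩
    have h := hadd a (-a)
    rw [add_neg_cancel, deltaZero hadd, ha.2.2, zero_add] at h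
    exact h.symm
  inv_mem' := fun a ha => by
    refine ⟨Set.inv_mem_center ha.1, by rw [map_inv₀, ha.2.1], ?_⟩
    by_cases h : a = 0
    · rw [h, inv_zero]; exact deltaZero hadd
    · have hl := hleib a a⁻¹
      rw [mul_inv_cancel₀ h, deltaOne (σ := σ) hleib, ha.2.2, zero_mul, add_zero] at hl
      rcases mul_eq_zero.mp hl.symm with h1 | h2
      · exact absurd (σ.injective (by rw [h1, map_zero])) h
      · exact h2


/-- `B` is a central algebra of degree `s` over the quotient `K[x]/(P)`:
there is a homomorphism `χ : K[x] →+* B` with kernel `(P)` whose range is the center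
of `B`, and `B` has a basis of size `s²` over the center, with coefficients
unique modulo `P`. -/
def IsCentralAlgModOfDeg {K : Type} [DivisionRing K] (P : Polynomial K)
    (B : Type) [Ring B] (s : ℕ) : Prop :=
  ∃ χ : Polynomial K →+* B, (∀ q : Polynomial K, χ q = 0 ↔ P ∣ q) ∧
    Set.range ⇑χ = Set.center B ∧
    ∃ bb : Fin (s * s) → B, ∀ x : B,
      ∃ cf : Fin (s * s) → Polynomial K, x = ∑ i, χ (cf i) * bb i ∧
        ∀ cf' : Fin (s * s) → Polynomial K,
          x = ∑ i, χ (cf' i) * bb i → ∀ i, P ∣ (cf i - cf' i)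

/-- `B` is a (finite-dimensional) central simple algebra over the field `K`. -/
def CentralSimpleOver (K : Type) [DivisionRing K] (B : Type) [Ring B] : Prop :=
  IsSimpleRing B ∧ ∃ χ : K →+* B, Function.Injective ⇑χ ∧ Set.range ⇑χ = Set.center B ∧
    ∃ (N : ℕ) (bb : Fin N → B), ∀ x : B, ∃! cf : Fin N → K, x = ∑ i, χ (cf i) * bb i

/-- The maps `Δ_{j,i}` associated with `(σ, δ)`. -/
def Delta {D : Type} [DivisionRing D] (σ : D →+* D) (δ : D → D) : ℕ → ℕ → D → D
  | 0, 0 => id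
  | 0, _ + 1 => fun _ => 0
  | j + 1, 0 => fun a => δ (Delta σ δ j 0 a)
  | j + 1, i + 1 => fun a => δ (Delta σ δ j (i + 1) a) + σ (Delta σ δ j i a)

/-- `χ` realises an isomorphism from the commutative quotient `K[x]/(P)` onto the
subset `X` of the Petit algebra `S_f` (with multiplication `∘_f`). -/
def QuotMulIso {D : Type} [DivisionRing D] {σ : D →+* D} {δ : D → D} {R : Type} [Ring R]
    (S : SkewPolyData D σ δ R) (f : R) (X : Set R) (K : Subfield D)
    (P : Polynomial ↥K) (χ : Polynomial ↥K → R) : Prop :=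
  (∀ q, χ q ∈ X) ∧ χ 1 = 1 ∧ (∀ q r, χ (q + r) = χ q + χ r) ∧
    (∀ q r, χ (q * r) = S.pmul f (χ q) (χ r)) ∧
    (∀ x ∈ X, ∃ q, χ q = x) ∧ (∀ q, χ q = 0 ↔ P ∣ q)

/-- A description of the right nucleus of the Petit algebra `S_f` as a central division
algebra `B` of degree `s` over `E = K[x]/(P)`, together with a ring isomorphism
`R/Rh ≅ M_k(Nuc_r(S_f))` (given by a surjective ring homomorphism with kernel `Rh`). -/
structure NucCDADesc {D : Type} [DivisionRing D] {σ : D →+* D} {δ : D → D}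
    {R : Type} [Ring R] (S : SkewPolyData D σ δ R)
    (f h : R) (K : Subfield D) (P : Polynomial ↥K) (s k : ℕ) where
  B : Type
  [instB : DivisionRing B]
  ψ : R → B
  hψ : S.SubMulIso f (S.NucR f) B ψ
  hcda : IsCentralAlgModOfDeg P B s
  Φ : R →+* Matrix (Fin k) (Fin k) B
  hΦ : Function.Surjective ⇑Φ
  hker : ∀ x : R, Φ x = 0 ↔ ∃ q : R, x = q * h

/-- A description of the eigenring of an irreducible divisor `g` of `h` as a central
division algebra `B` of degree `sp` over `E = K[x]/(P)`, with `R/Rh ≅ M_k(B)` and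
`Nuc_r(S_f) ≅ M_l(B)` a central simple algebra of degree `l·sp` over `E`. -/
structure EigCDADesc {D : Type} [DivisionRing D] {σ : D →+* D} {δ : D → D}
    {R : Type} [Ring R] (S : SkewPolyData D σ δ R)
    (f h g : R) (K : Subfield D) (P : Polynomial ↥K) (l k sp : ℕ) where
  B : Type
  [instB : DivisionRing B]
  ψg : R → B
  hψg : S.SubMulIso g (S.EigR g) B ψg
  hcda : IsCentralAlgModOfDeg P B sp
  Φ : R →+* Matrix (Fin k) (Fin k) B
  hΦ : Function.Surjective ⇑Φ
  hker : ∀ x : R, Φ x = 0 ↔ ∃ q : R, x = q * h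
  ψ : R → Matrix (Fin l) (Fin l) B
  hψ : S.SubMulIso f (S.NucR f) (Matrix (Fin l) (Fin l) B) ψ
  hcsa : IsCentralAlgModOfDeg P (Matrix (Fin l) (Fin l) B) (l * sp)
  hsimple : IsSimpleRing (Matrix (Fin l) (Fin l) B)

/-- A description of the eigenring of `f` as a central simple algebra over the field `K`. -/
structure CSADesc {D : Type} [DivisionRing D] {σ : D →+* D} {δ : D → D}
    {R : Type} [Ring R] (S : SkewPolyData D σ δ R) (f : R) (K : Subfield D) where
  B : Type
  [instB : Ring B]
  ψ : R → B
  hψ : S.SubMulIso f (S.EigR f) B ψ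
  hcsa : CentralSimpleOver ↥K B

/-- A description of `R/Rh` as a semisimple Artinian ring, direct sum of the simple
Artinian rings `R/Rπᵢ`, of the decomposition of `R/Rf` into simple modules, and of
the right nucleus of `S_f` as `⊕ᵢ M_{rsᵢ}(E(fiᵢ))`. -/
structure SemisimpleDesc {D : Type} [DivisionRing D] {σ : D →+* D} {δ : D → D}
    {R : Type} [Ring R] (S : SkewPolyData D σ δ R)
    (f h : R) (z : ℕ) (π : Fin z → R) (fi : Fin z → R) (rs : Fin z → ℕ) where
  A : Fin z → Type
  [instA : ∀ i, Ring (A i)]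
  φ : ∀ i, R →+* A i
  hφsurj : ∀ i, Function.Surjective ⇑(φ i)
  hφker : ∀ i, ∀ x : R, φ i x = 0 ↔ ∃ q : R, x = q * π i
  hsimpleA : ∀ i, IsSimpleRing (A i)
  hartA : ∀ i, IsArtinianRing (A i)
  hss : IsSemisimpleRing ((i : Fin z) → A i)
  hart : IsArtinianRing ((i : Fin z) → A i)
  hPisurj : Function.Surjective ⇑(Pi.ringHom φ)
  hPiker : ∀ x : R, Pi.ringHom φ x = 0 ↔ ∃ q : R, x = q * h
  modIso : (R ⧸ (Submodule.span R {f})) ≃ₗ[R]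
      ((i : Fin z) → Fin (rs i) → (R ⧸ (Submodule.span R {fi i})))
  B : Fin z → Type
  [instB : ∀ i, Ring (B i)]
  ψg : ∀ i, R → B i
  hψg : ∀ i, S.SubMulIso (fi i) (S.EigR (fi i)) (B i) (ψg i)
  Ψ : R → ((i : Fin z) → Matrix (Fin (rs i)) (Fin (rs i)) (B i))
  hΨ : S.SubMulIso f (S.NucR f) ((i : Fin z) → Matrix (Fin (rs i)) (Fin (rs i)) (B i)) Ψ
  hssNuc : IsSemisimpleRing ((i : Fin z) → Matrix (Fin (rs i)) (Fin (rs i)) (B i))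
  hartNuc : IsArtinianRing ((i : Fin z) → Matrix (Fin (rs i)) (Fin (rs i)) (B i))

/-- the subfield `F = C ∩ Fix(σ)` of `D` (for `δ = 0`). -/
def fixC {D : Type} [DivisionRing D] (σ : D →+* D) : Subfield D :=
  ctrSubfield σ (fun _ => 0) (fun _ _ => by simp) (fun _ _ => by simp)

/-- the subfield `F = C ∩ Const(δ)` of `D` (for `σ = id`). -/
def constC {D : Type} [DivisionRing D] (δ : D → D)
    (hadd : ∀ x y : D, δ (x + y) = δ x + δ y)
    (hleib : ∀ x y : D, δ (x * y) = x * δ y + δ x * y) : Subfield D :=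
  ctrSubfield (RingHom.id D) δ hadd (fun x y => by simpa using hleib x y)

namespace SkewPolyData

variable {D R : Type} [DivisionRing D] [Ring R] {σ : D →+* D} {δ : D → D}

section Coefficients

variable (S : SkewPolyData D σ δ R)

noncomputable def ofCoeff : (ℕ →₀ D) →+ R :=
  Finsupp.liftAddHom fun i => (AddMonoidHom.mulRight (S.t ^ i)).comp S.ι.toAddMonoidHom

theorem ofCoeff_single (i : ℕ) (c : D) : S.ofCoeff (Finsupp.single i c) = S.ι c * S.t ^ i :=
  Finsupp.liftAddHom_apply_single _ _ _

theorem ofCoeff_coeff (x : R) : S.ofCoeff (S.coeff x) = x := S.sum_coeff x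

theorem coeff_ofCoeff (c : ℕ →₀ D) : S.coeff (S.ofCoeff c) = c := S.coeff_sum c

noncomputable def coeffAddEquiv : R ≃+ (ℕ →₀ D) where
  toFun := S.coeff
  invFun := S.ofCoeff
  left_inv := S.ofCoeff_coeff
  right_inv := S.coeff_ofCoeff
  map_add' x y := by
    conv_lhs => rw [← S.ofCoeff_coeff x, ← S.ofCoeff_coeff y, ← map_add, coeff_ofCoeff]

theorem coeff_zero : S.coeff 0 = 0 := map_zero S.coeffAddEquiv

theorem coeff_add (x y : R) : S.coeff (x + y) = S.coeff x + S.coeff y :=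
  map_add S.coeffAddEquiv x y

theorem coeff_neg (x : R) : S.coeff (-x) = -S.coeff x := map_neg S.coeffAddEquiv x

theorem coeff_sub (x y : R) : S.coeff (x - y) = S.coeff x - S.coeff y :=
  map_sub S.coeffAddEquiv x y

theorem coeff_eq_zero_iff {x : R} : S.coeff x = 0 ↔ x = 0 :=
  map_eq_zero_iff S.coeffAddEquiv S.coeffAddEquiv.injective

theorem coeff_ι_mul_t_pow (c : D) (i : ℕ) :
    S.coeff (S.ι c * S.t ^ i) = Finsupp.single i c := by
  rw [← ofCoeff_single, coeff_ofCoeff]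

theorem coeff_ι (c : D) : S.coeff (S.ι c) = Finsupp.single 0 c := by
  simpa using S.coeff_ι_mul_t_pow c 0

theorem coeff_t_pow (i : ℕ) : S.coeff (S.t ^ i) = Finsupp.single i 1 := by
  simpa using S.coeff_ι_mul_t_pow 1 i

@[elab_as_elim]
theorem induction_on {motive : R → Prop} (x : R) (zero : motive 0)
    (add : ∀ x y, motive x → motive y → motive (x + y))
    (monomial : ∀ (c : D) (i : ℕ), motive (S.ι c * S.t ^ i)) : motive x := by
  rw [← S.ofCoeff_coeff x]
  induction S.coeff x using Finsupp.induction_linear with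
  | zero => simpa using zero
  | add c d hc hd => simpa using add _ _ hc hd
  | single i c => simpa [ofCoeff_single] using monomial c i

theorem coeff_mul_t_pow_add (x : R) (k j : ℕ) : S.coeff (x * S.t ^ k) (j + k) = S.coeff x j := by
  induction x using S.induction_on with
  | zero => simp [coeff_zero]
  | add x y hx hy =>
    rw [add_mul, coeff_add, coeff_add, Finsupp.add_apply, Finsupp.add_apply, hx, hy]
  | monomial c i =>
    rw [mul_assoc, ← pow_add, coeff_ι_mul_t_pow, coeff_ι_mul_t_pow]
    simp only [Finsupp.single_apply, add_left_inj]

end Coefficients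

section Degree

variable (S : SkewPolyData D σ δ R)

theorem le_deg_of_coeff_ne_zero {x : R} {n : ℕ} (h : S.coeff x n ≠ 0) :
    (n : WithBot ℕ) ≤ S.deg x :=
  Finset.le_max (Finsupp.mem_support_iff.2 h)

theorem deg_lt_iff {x : R} {n : ℕ} : S.deg x < n ↔ ∀ j, n ≤ j → S.coeff x j = 0 := by
  refine (Finset.sup_lt_iff (WithBot.bot_lt_coe n)).trans ?_
  simp only [Finsupp.mem_support_iff, WithBot.coe_lt_coe, ne_eq]
  exact forall_congr' fun j => by rw [← not_imp_not, not_lt, not_not]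

theorem deg_eq_bot {x : R} : S.deg x = ⊥ ↔ x = 0 := by
  rw [deg, Finset.max_eq_bot, Finsupp.support_eq_empty, coeff_eq_zero_iff]

theorem deg_add_le (x y : R) : S.deg (x + y) ≤ max (S.deg x) (S.deg y) := by
  classical
  rw [deg, deg, deg, coeff_add, ← Finset.max_union]
  exact Finset.max_mono Finsupp.support_add

theorem deg_neg (x : R) : S.deg (-x) = S.deg x := by
  rw [deg, coeff_neg, Finsupp.support_neg, deg]

theorem deg_sub_le (x y : R) : S.deg (x - y) ≤ max (S.deg x) (S.deg y) := by
  simpa [sub_eq_add_neg, deg_neg] using S.deg_add_le x (-y)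

theorem deg_ι_lt {n : ℕ} (hn : 0 < n) (c : D) : S.deg (S.ι c) < n := by
  rw [deg_lt_iff]
  intro j hj
  rw [coeff_ι, Finsupp.single_eq_of_ne (by omega)]

theorem deg_t_pow (i : ℕ) : S.deg (S.t ^ i) = i := by
  rw [deg, coeff_t_pow, Finsupp.support_single i one_ne_zero, Finset.max_singleton]
  rfl

theorem deg_t_pow_sub_ι {m : ℕ} (hm : 0 < m) (a : D) : S.deg (S.t ^ m - S.ι a) = m := by
  refine le_antisymm ?_ (S.le_deg_of_coeff_ne_zero ?_)
  · refine Finset.max_le fun j hj => ?_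
    rw [Nat.cast_withBot, WithBot.coe_le_coe]
    by_contra hjm
    apply Finsupp.mem_support_iff.1 hj
    rw [coeff_sub, coeff_t_pow, coeff_ι, Finsupp.sub_apply,
      Finsupp.single_eq_of_ne (by omega), Finsupp.single_eq_of_ne (by omega), sub_zero]
  · rw [coeff_sub, coeff_t_pow, coeff_ι, Finsupp.sub_apply, Finsupp.single_eq_same,
      Finsupp.single_eq_of_ne (by omega), sub_zero]
    exact one_ne_zero

end Degree

section Division

variable (S : SkewPolyData D σ δ R) {f : R} (hf0 : f ≠ 0)
  (hdiv : ∀ q : R, S.deg (q * f) < S.deg f → q = 0)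
include hf0 hdiv

theorem rmod_eq_of_eq_mul_add {g q w : R} (hw : S.deg w < S.deg f) (h : g = q * f + w) :
    S.rmod g f = w := by
  obtain ⟨⟨q', hq'⟩, hdeg⟩ := S.rmod_spec g f hf0
  have hdiff : (q - q') * f = S.rmod g f - w := by
    rw [sub_mul, sub_eq_sub_iff_add_eq_add, ← h]
    exact hq'.trans (add_comm _ _)
  have hq : q - q' = 0 :=
    hdiv _ (hdiff ▸ (S.deg_sub_le _ _).trans_lt (max_lt hdeg hw))
  rw [← sub_eq_zero, ← hdiff, hq, zero_mul]

theorem rmod_mul_self (q : R) : S.rmod (q * f) f = 0 := by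
  refine S.rmod_eq_of_eq_mul_add hf0 hdiv ?_ (add_zero _).symm
  rw [(S.deg_eq_bot).2 rfl, bot_lt_iff_ne_bot, Ne, deg_eq_bot]
  exact hf0

theorem rmod_eq_zero_iff {g : R} : S.rmod g f = 0 ↔ ∃ q, g = q * f := by
  refine ⟨fun h => ?_, fun ⟨q, hq⟩ => hq ▸ S.rmod_mul_self hf0 hdiv q⟩
  obtain ⟨⟨q, hq⟩, -⟩ := S.rmod_spec g f hf0
  exact ⟨q, by rw [hq, h, add_zero]⟩

theorem rmod_add (g h : R) : S.rmod (g + h) f = S.rmod g f + S.rmod h f := by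
  obtain ⟨⟨qg, hqg⟩, hg⟩ := S.rmod_spec g f hf0
  obtain ⟨⟨qh, hqh⟩, hh⟩ := S.rmod_spec h f hf0
  refine S.rmod_eq_of_eq_mul_add hf0 hdiv (q := qg + qh)
    ((S.deg_add_le _ _).trans_lt (max_lt hg hh)) ?_
  conv_lhs => rw [hqg, hqh]
  rw [add_mul]
  abel

theorem rmod_add_mul_self (g q : R) : S.rmod (g + q * f) f = S.rmod g f := by
  rw [S.rmod_add hf0 hdiv, S.rmod_mul_self hf0 hdiv, add_zero]

theorem rmod_mul_rmod (g h : R) : S.rmod (g * S.rmod h f) f = S.rmod (g * h) f := by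
  obtain ⟨⟨q, hq⟩, -⟩ := S.rmod_spec h f hf0
  conv_rhs => rw [hq, mul_add, add_comm, ← mul_assoc]
  rw [S.rmod_add_mul_self hf0 hdiv]

theorem rmod_rmod_mul_of_mul_eq {x p : R} (hx : f * x = p * f) (g : R) :
    S.rmod (S.rmod g f * x) f = S.rmod (g * x) f := by
  obtain ⟨⟨q, hq⟩, -⟩ := S.rmod_spec g f hf0
  conv_rhs => rw [hq, add_mul, add_comm, mul_assoc, hx, ← mul_assoc]
  rw [S.rmod_add_mul_self hf0 hdiv]

theorem eigR_subset_nucR : S.EigR f ⊆ S.NucR f := by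
  rintro x ⟨hx, p, hp⟩
  refine ⟨hx, fun g _ h _ => ?_⟩
  simp only [pmul]
  rw [S.rmod_rmod_mul_of_mul_eq hf0 hdiv hp, S.rmod_mul_rmod hf0 hdiv, mul_assoc]

theorem nucR_subset_eigR {k : ℕ} {r : R} (ht : S.t ∈ S.carr f) (htk : S.t ^ k ∈ S.carr f)
    (hr : S.deg r < S.deg f) (hf : S.t ^ (k + 1) = f + r) : S.NucR f ⊆ S.EigR f := by
  rintro x ⟨hx, hassoc⟩
  refine ⟨hx, (S.rmod_eq_zero_iff hf0 hdiv).1 ?_⟩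
  have htt : S.pmul f S.t (S.t ^ k) = r := by
    rw [pmul, ← pow_succ', hf]
    exact S.rmod_eq_of_eq_mul_add hf0 hdiv hr (by rw [one_mul])
  have h := hassoc S.t ht (S.t ^ k) htk
  rw [htt] at h
  unfold pmul at h
  rw [S.rmod_mul_rmod hf0 hdiv, ← mul_assoc, ← pow_succ', hf, add_mul,
    S.rmod_add hf0 hdiv] at h
  exact add_eq_right.1 h.symm

end Division

section Twisted

variable (S : SkewPolyData D σ (fun _ => 0) R)

theorem t_pow_mul_ι (j : ℕ) (c : D) : S.t ^ j * S.ι c = S.ι (σ^[j] c) * S.t ^ j := by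
  induction j generalizing c with
  | zero => simp
  | succ j ih =>
    rw [pow_succ', mul_assoc, ih, ← mul_assoc, S.t_mul, map_zero, add_zero, mul_assoc,
      ← pow_succ', Function.iterate_succ_apply']

theorem coeff_mul_ι (x : R) (c : D) (j : ℕ) :
    S.coeff (x * S.ι c) j = S.coeff x j * σ^[j] c := by
  induction x using S.induction_on with
  | zero => simp [coeff_zero]
  | add x y hx hy =>
    rw [add_mul, coeff_add, coeff_add, Finsupp.add_apply, Finsupp.add_apply, hx, hy, add_mul]
  | monomial d i =>
    rw [mul_assoc, t_pow_mul_ι, ← mul_assoc, ← map_mul, coeff_ι_mul_t_pow, coeff_ι_mul_t_pow]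
    by_cases hij : i = j
    · subst hij; simp
    · rw [Finsupp.single_eq_of_ne' hij, Finsupp.single_eq_of_ne' hij, zero_mul]

theorem eq_zero_of_deg_mul_t_pow_sub_ι_lt {m : ℕ} (hm : 0 < m) (a : D) {q : R}
    (h : S.deg (q * (S.t ^ m - S.ι a)) < S.deg (S.t ^ m - S.ι a)) : q = 0 := by
  by_contra hq
  obtain ⟨n, hn⟩ := WithBot.ne_bot_iff_exists.1 (mt S.deg_eq_bot.1 hq)
  have hqn : S.coeff q n ≠ 0 := Finsupp.mem_support_iff.1 (Finset.mem_of_max hn.symm)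
  have hq_above : S.coeff q (n + m) = 0 := by
    by_contra hne
    have := S.le_deg_of_coeff_ne_zero hne
    rw [← hn, Nat.cast_withBot, WithBot.coe_le_coe] at this
    omega
  have hlead : S.coeff (q * (S.t ^ m - S.ι a)) (n + m) = S.coeff q n := by
    rw [mul_sub, coeff_sub, Finsupp.sub_apply, coeff_mul_t_pow_add, coeff_mul_ι, hq_above,
      zero_mul, sub_zero]
  rw [S.deg_t_pow_sub_ι hm, deg_lt_iff] at h
  exact hqn (hlead ▸ h (n + m) (by omega))

theorem t_pow_sub_ι_ne_zero {m : ℕ} (hm : 0 < m) (a : D) : S.t ^ m - S.ι a ≠ 0 := by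
  intro h
  have hdeg := S.deg_t_pow_sub_ι hm a
  rw [h, S.deg_eq_bot.2 rfl] at hdeg
  exact WithBot.bot_ne_coe hdeg

theorem nucR_t_pow_sub_ι_eq_eigR {m : ℕ} (hm : 1 < m) (a : D) :
    S.NucR (S.t ^ m - S.ι a) = S.EigR (S.t ^ m - S.ι a) := by
  have hf0 := S.t_pow_sub_ι_ne_zero (m := m) (by omega) a
  have hdiv := fun q => S.eq_zero_of_deg_mul_t_pow_sub_ι_lt (q := q) (m := m) (by omega) a
  have hdeg := S.deg_t_pow_sub_ι (m := m) (by omega) a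
  have hcarr : ∀ i < m, S.t ^ i ∈ S.carr (S.t ^ m - S.ι a) := fun i hi => by
    change S.deg _ < _
    rw [deg_t_pow, hdeg]
    exact_mod_cast hi
  refine subset_antisymm (S.nucR_subset_eigR hf0 hdiv (k := m - 1) ?_ (hcarr _ (by omega))
    (hdeg ▸ S.deg_ι_lt (by omega) a) ?_) (S.eigR_subset_nucR hf0 hdiv)
  · simpa using hcarr 1 hm
  · rw [Nat.sub_add_cancel hm.le, sub_add_cancel]

section FixedConstant

variable {m : ℕ} {a : D} (ha : σ a = a)
include ha

theorem t_pow_sub_ι_mul (x : R) :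
    (S.t ^ m - S.ι a) * x =
      S.ofCoeff ((S.coeff x).mapRange (σ^[m]) (iterate_map_zero σ m)) * (S.t ^ m - S.ι a) +
        S.ofCoeff ((S.coeff x).mapRange (fun c => σ^[m] c * a - a * c) (by simp)) := by
  have hadd (c d : D) : σ^[m] (c + d) * a - a * (c + d) =
      (σ^[m] c * a - a * c) + (σ^[m] d * a - a * d) := by
    rw [iterate_map_add, add_mul, mul_add]
    abel
  induction x using S.induction_on with
  | zero => simp [coeff_zero]
  | add x y hx hy =>
    rw [mul_add, hx, hy, coeff_add, Finsupp.mapRange_add (iterate_map_add σ m),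
      Finsupp.mapRange_add hadd, map_add, map_add, add_mul]
    abel
  | monomial c i =>
    -- `σ a = a` makes `t ^ i` commute with `ι a`
    have hleft : S.t ^ m * (S.ι c * S.t ^ i) = S.ι (σ^[m] c) * S.t ^ i * S.t ^ m := by
      rw [← mul_assoc, t_pow_mul_ι, mul_assoc, mul_assoc, ← pow_add, ← pow_add, add_comm]
    have hright : S.ι (σ^[m] c) * S.t ^ i * S.ι a = S.ι (σ^[m] c * a) * S.t ^ i := by
      rw [mul_assoc, t_pow_mul_ι, Function.iterate_fixed ha, ← mul_assoc, ← map_mul]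
    rw [coeff_ι_mul_t_pow, Finsupp.mapRange_single, Finsupp.mapRange_single, ofCoeff_single,
      ofCoeff_single, sub_mul, mul_sub, hleft, hright, map_sub, sub_mul]
    simp only [map_mul, mul_assoc]
    abel

variable (hm : 0 < m)
include hm

theorem coeff_rmod_t_pow_sub_ι_mul {x : R} (hx : S.deg x < m) (i : ℕ) :
    S.coeff (S.rmod ((S.t ^ m - S.ι a) * x) (S.t ^ m - S.ι a)) i =
      σ^[m] (S.coeff x i) * a - a * S.coeff x i := by
  rw [S.rmod_eq_of_eq_mul_add (S.t_pow_sub_ι_ne_zero hm a)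
    (fun q => S.eq_zero_of_deg_mul_t_pow_sub_ι_lt hm a) ?_ (S.t_pow_sub_ι_mul ha x),
    coeff_ofCoeff, Finsupp.mapRange_apply]
  rw [S.deg_t_pow_sub_ι hm, deg_lt_iff]
  intro j hj
  rw [coeff_ofCoeff, Finsupp.mapRange_apply, S.deg_lt_iff.1 hx j hj]
  simp

theorem mem_eigR_t_pow_sub_ι_iff {x : R} :
    x ∈ S.EigR (S.t ^ m - S.ι a) ↔
      S.deg x < S.deg (S.t ^ m - S.ι a) ∧ ∀ i, σ^[m] (S.coeff x i) * a = a * S.coeff x i := by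
  refine and_congr_right fun hx => ?_
  rw [S.deg_t_pow_sub_ι hm] at hx
  rw [← S.rmod_eq_zero_iff (S.t_pow_sub_ι_ne_zero hm a)
    (fun q => S.eq_zero_of_deg_mul_t_pow_sub_ι_lt hm a), ← S.coeff_eq_zero_iff, Finsupp.ext_iff]
  simp only [S.coeff_rmod_t_pow_sub_ι_mul ha hm hx, Finsupp.coe_zero, Pi.zero_apply, sub_eq_zero]

theorem ι_mem_eigR_t_pow_sub_ι_iff (c : D) :
    S.ι c ∈ S.EigR (S.t ^ m - S.ι a) ↔ σ^[m] c * a = a * c := by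
  rw [S.mem_eigR_t_pow_sub_ι_iff ha hm, S.coeff_ι]
  refine ⟨fun h => by simpa using h.2 0,
    fun h => ⟨(S.deg_t_pow_sub_ι hm a).symm ▸ S.deg_ι_lt hm c, fun i => ?_⟩⟩
  rcases eq_or_ne i 0 with rfl | hi
  · simpa using h
  · simp [Finsupp.single_eq_of_ne hi]

end FixedConstant

end Twisted

end SkewPolyData

theorem statement_16_general (D R : Type) [DivisionRing D] [Ring R]
    (σ : D →+* D)
    (S : SkewPolyData D σ (fun _ => 0) R)
    (m : ℕ) (hm : 1 < m) (a : D)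
    (ha : a ∈ Set.center D ∧ σ a = a)
    (f : R) (hf : f = S.t ^ m - S.ι a)
    (L : Set D) (hL : L = {x : D | S.ι x ∈ S.NucR f}) :
    S.NucR f = {x : R | S.deg x < S.deg f ∧ ∀ i : ℕ, S.coeff x i ∈ L} := by
  subst hf hL
  have hm0 : 0 < m := by omega
  rw [S.nucR_t_pow_sub_ι_eq_eigR hm]
  ext x
  simp only [Set.mem_ofPred_eq, S.ι_mem_eigR_t_pow_sub_ι_iff ha.2 hm0]
  exact S.mem_eigR_t_pow_sub_ι_iff ha.2 hm0

theorem statement_16 (D R : Type) [DivisionRing D] [Ring R]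
    (σ : D →+* D) (hσinj : Function.Injective ⇑σ)
    (S : SkewPolyData D σ (fun _ => 0) R)
    (m : ℕ) (hm : 1 < m) (a : D)
    (ha : a ∈ Set.center D ∧ σ a = a)
    (f : R) (hf : f = S.t ^ m - S.ι a)
    (L : Set D) (hL : L = {x : D | S.ι x ∈ S.NucR f}) :
    S.NucR f = {x : R | S.deg x < S.deg f ∧ ∀ i : ℕ, S.coeff x i ∈ L} :=
  statement_16_general D R σ S m hm a ha f hf L hL
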